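/- arXiv:1910.03847 — 7 statements merged into one kernel-verified Lean document; each statement's English description precedes it below -/
import Mathlib

section
/- Let X be a real Banach space and φ : X → (-∞, +∞] a proper convex lower semicontinuous function. Then ∂φ is a maximal monotone operator: if (z, z*) ∈ X × X* satisfies ⟨z - x, z* - x*⟩ ≥ 0 for all (x, x*) in the graph of ∂φ, then (z, z*) ∈ ∂φ. -/
noncomputable section

variable {X : Type*} [NormedAddCommGroup X] [NormedSpace ℝ X] [CompleteSpace X]

/-- The subdifferential of an extended-real-valued function `φ : X → (-∞,+∞]`,
viewed as a subset of `X × X*`: `(x, x*) ∈ ∂φ` iff `⟨y - x, x*⟩ + φ(x) ≤ φ(y)` for all `y`. -/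
def subdiff (φ : X → EReal) : Set (X × (X →L[ℝ] ℝ)) :=
  {p | ∀ y : X, ((p.2 (y - p.1) : ℝ) : EReal) + φ p.1 ≤ φ y}

/-- Convexity for extended-real-valued functions. -/
def ERealConvexOn {E : Type*} [AddCommGroup E] [Module ℝ E] (φ : E → EReal) : Prop :=
  ∀ x y : E, ∀ a b : ℝ, 0 ≤ a → 0 ≤ b → a + b = 1 →
    φ (a • x + b • y) ≤ (a : EReal) * φ x + (b : EReal) * φ y

/-- A function `X → (-∞,+∞]` is proper: it never takes the value `-∞` and is
finite somewhere. -/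
def ProperFn {E : Type*} (φ : E → EReal) : Prop :=
  (∀ x, φ x ≠ ⊥) ∧ (∃ x, φ x ≠ ⊤)

/-- The duality mapping `J_X(x) = {x* : ⟨x, x*⟩ = ‖x‖² = ‖x*‖²}`. -/
def dualityMap (x : X) : Set (X →L[ℝ] ℝ) :=
  {x' | x' x = ‖x‖ ^ 2 ∧ ‖x‖ ^ 2 = ‖x'‖ ^ 2}

/-- A monotone subset of `X × X*`. -/
def MonotoneSet (A : Set (X × (X →L[ℝ] ℝ))) : Prop :=
  ∀ p ∈ A, ∀ q ∈ A, 0 ≤ (p.2 - q.2) (p.1 - q.1)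

/-- A maximal monotone subset of `X × X*`. -/
def MaximalMonotoneSet (A : Set (X × (X →L[ℝ] ℝ))) : Prop :=
  MonotoneSet A ∧
    ∀ p : X × (X →L[ℝ] ℝ), (∀ q ∈ A, 0 ≤ (p.2 - q.2) (p.1 - q.1)) → p ∈ A

/-- The Fitzpatrick function of an operator `A : X ⇉ X*`:
`H_A(x, x*) = sup {⟨u, x*⟩ + ⟨x, u*⟩ - ⟨u, u*⟩ : (u, u*) ∈ A}`. -/
def fitz (A : Set (X × (X →L[ℝ] ℝ))) (p : X × (X →L[ℝ] ℝ)) : EReal :=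
  ⨆ q ∈ A, ((p.2 q.1 + q.2 p.1 - q.2 q.1 : ℝ) : EReal)

/-- `(x*, x) ∈ ∂H_A(u, u*)`, the subdifferential of the Fitzpatrick function at `(u, u*)`
with the pairing `⟨(x*, x), (z, z*)⟩ = ⟨z, x*⟩ + ⟨x, z*⟩`:
`⟨z - u, x*⟩ + ⟨x, z* - u*⟩ + H(u, u*) ≤ H(z, z*)` for all `(z, z*)`. -/
def inSubdiffFitz (A : Set (X × (X →L[ℝ] ℝ))) (u : X) (u' : X →L[ℝ] ℝ)
    (x' : X →L[ℝ] ℝ) (x : X) : Prop :=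
  ∀ z : X, ∀ z' : X →L[ℝ] ℝ,
    ((x' (z - u) + (z' - u') x : ℝ) : EReal) + fitz A (u, u') ≤ fitz A (z, z')

/-!
Given `(z, z*)` monotonically related to `∂φ` and `ε > 0`, Ekeland's variational principle,
applied to `φ + ‖· - z‖² / 2 - z*` (bounded below through an affine minorant of `φ`), gives a point
`x` minimizing `φ + h` with `h = ‖· - z‖² / 2 - z* + ε ‖· - x‖` convex and continuous. Separating
the epigraph of `φ` from the strict hypograph of `φ x + h x - h` produces `u ∈ ∂φ(x)` with
`h x - h y ≤ u (y - x)`. Testing monotonicity against `(x, u)` then forces `‖x - z‖ ≤ 2ε`, and the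
inequality for `h` bounds `‖u - z*‖ ≤ ‖x - z‖ + ε`. So `(z, z*)` lies in the closure of `∂φ`, which
is closed because `φ` is lower semicontinuous.
-/

open Set Filter Topology

section Epigraph

variable {E : Type*}

/-- The epigraph of `φ` at real heights: a subset of the vector space `E × ℝ`, where Hahn–Banach
separation applies. -/
def realEpigraph (φ : E → EReal) : Set (E × ℝ) := {p | φ p.1 ≤ p.2}

theorem ERealConvexOn.convex_realEpigraph [AddCommGroup E] [Module ℝ E] {φ : E → EReal}
    (hφ : ERealConvexOn φ) : Convex ℝ (realEpigraph φ) := by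
  rintro ⟨x, s⟩ hx ⟨y, t⟩ hy a b ha hb hab
  calc φ (a • x + b • y) ≤ a * φ x + b * φ y := hφ x y a b ha hb hab
    _ ≤ a * s + b * t := add_le_add (mul_le_mul_of_nonneg_left hx (EReal.coe_nonneg.2 ha))
        (mul_le_mul_of_nonneg_left hy (EReal.coe_nonneg.2 hb))
    _ = ((a * s + b * t : ℝ) : EReal) := by norm_cast

theorem LowerSemicontinuous.isClosed_realEpigraph [TopologicalSpace E] {φ : E → EReal}
    (hφ : LowerSemicontinuous φ) : IsClosed (realEpigraph φ) :=
  hφ.isClosed_epigraph.preimage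
    (continuous_fst.prodMk (continuous_coe_real_ereal.comp continuous_snd))

end Epigraph

theorem LowerSemicontinuous.add_coe {α : Type*} [TopologicalSpace α] {f : α → EReal}
    (hf : LowerSemicontinuous f) {g : α → ℝ} (hg : Continuous g) :
    LowerSemicontinuous fun x => f x + g x :=
  hf.add' (continuous_coe_real_ereal.comp hg).lowerSemicontinuous fun _ =>
    EReal.continuousAt_add (Or.inr (EReal.coe_ne_bot _)) (Or.inr (EReal.coe_ne_top _))

theorem EReal.coe_le_of_forall_le_coe {x : EReal} {a : ℝ} (h : ∀ t : ℝ, x ≤ t → a ≤ t) :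
    (a : EReal) ≤ x :=
  EReal.le_of_forall_lt_iff_le.mp fun t ht => EReal.coe_le_coe_iff.2 (h t ht.le)

theorem ContinuousLinearMap.apply_prodMk_real {E : Type*} [TopologicalSpace E] [AddCommGroup E]
    [Module ℝ E] (L : E × ℝ →L[ℝ] ℝ) (y : E) (t : ℝ) :
    L (y, t) = L.comp (ContinuousLinearMap.inl ℝ E ℝ) y + t * L (0, 1) := by
  have h : ((0 : E), t) = t • ((0 : E), (1 : ℝ)) := by simp
  rw [← L.comp_inl_add_comp_inr (y, t)]
  simp only [ContinuousLinearMap.comp_apply, ContinuousLinearMap.inr_apply]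
  rw [h, map_smul, smul_eq_mul]

section Ekeland

variable {α : Type*} [MetricSpace α] {F : α → ℝ} {ε : ℝ}

def ekelandSet (F : α → ℝ) (ε : ℝ) (x : α) : Set α := {y | F y + ε * dist y x ≤ F x}

theorem self_mem_ekelandSet (x : α) : x ∈ ekelandSet F ε x := by simp [ekelandSet]

theorem ekelandSet_subset (hε : 0 ≤ ε) {x y : α} (hy : y ∈ ekelandSet F ε x) :
    ekelandSet F ε y ⊆ ekelandSet F ε x := fun z (hz : F z + ε * dist z y ≤ F y) => by
  have hy : F y + ε * dist y x ≤ F x := hy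
  show F z + ε * dist z x ≤ F x
  nlinarith [mul_le_mul_of_nonneg_left (dist_triangle z y x) hε]

theorem isClosed_ekelandSet (hF : LowerSemicontinuous F) (x : α) :
    IsClosed (ekelandSet F ε x) :=
  (hF.add (by fun_prop : Continuous fun y => ε * dist y x).lowerSemicontinuous).isClosed_preimage _

theorem dist_lt_of_mem_ekelandSet (hbdd : BddBelow (range F)) (hε : 0 < ε) {x x' y : α} {δ : ℝ}
    (hx' : x' ∈ ekelandSet F ε x) (hnear : F x' < sInf (F '' ekelandSet F ε x) + ε * δ)
    (hy : y ∈ ekelandSet F ε x') : dist y x' < δ := by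
  have hinf : sInf (F '' ekelandSet F ε x) ≤ F y :=
    csInf_le (hbdd.mono (image_subset_range _ _)) ⟨y, ekelandSet_subset hε.le hx' hy, rfl⟩
  have hy : F y + ε * dist y x' ≤ F x' := hy
  exact lt_of_mul_lt_mul_left (by linarith) hε.le

theorem LowerSemicontinuous.exists_le_add_mul_dist [CompleteSpace α]
    (hF : LowerSemicontinuous F) (hbdd : BddBelow (range F)) (hε : 0 < ε) (x₀ : α) :
    ∃ x, F x ≤ F x₀ ∧ ∀ y, F x ≤ F y + ε * dist y x := by
  have hnext : ∀ (x : α) (n : ℕ), ∃ x' ∈ ekelandSet F ε x,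
      F x' < sInf (F '' ekelandSet F ε x) + ε * (1 / 2) ^ n := fun x n => by
    obtain ⟨_, ⟨x', hx', rfl⟩, hlt⟩ :=
      Real.lt_sInf_add_pos ((nonempty_of_mem (self_mem_ekelandSet x)).image F)
        (by positivity : 0 < ε * (1 / 2) ^ n)
    exact ⟨x', hx', hlt⟩
  -- each point nearly minimizes `F` on the previous Ekeland set, which makes the next one small
  choose next hnext_mem hnext_lt using hnext
  let seq : ℕ → α := fun n => Nat.rec x₀ (fun n x => next x n) n
  have hsmall : ∀ n, ∀ y ∈ ekelandSet F ε (seq (n + 1)), dist y (seq (n + 1)) < (1 / 2) ^ n :=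
    fun n _ => dist_lt_of_mem_ekelandSet hbdd hε (hnext_mem _ _) (hnext_lt _ _)
  have hanti : Antitone fun n => ekelandSet F ε (seq n) :=
    antitone_nat_of_succ_le fun n => ekelandSet_subset hε.le (hnext_mem _ _)
  have hcauchy : CauchySeq fun n => seq (n + 1) := by
    refine cauchySeq_of_le_geometric_two (C := 2) fun n => ?_
    simpa [dist_comm] using (hsmall n _ (hnext_mem _ _)).le
  obtain ⟨x, hx⟩ := cauchySeq_tendsto_of_complete hcauchy
  have hx_mem : ∀ n, x ∈ ekelandSet F ε (seq n) := fun n =>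
    (isClosed_ekelandSet hF _).mem_of_tendsto hx
      (eventually_atTop.2 ⟨n, fun m hm => hanti (by omega : n ≤ m + 1) (self_mem_ekelandSet _)⟩)
  have hx₀ : F x + ε * dist x x₀ ≤ F x₀ := hx_mem 0
  refine ⟨x, by nlinarith [dist_nonneg (x := x) (y := x₀)], fun y => ?_⟩
  by_contra! hlt
  have hy : ∀ n, y ∈ ekelandSet F ε (seq n) := fun n =>
    ekelandSet_subset hε.le (hx_mem n) hlt.le
  have hyx : y = x := eq_of_forall_dist_le fun η hη => by
    obtain ⟨n, hn⟩ := exists_pow_lt_of_lt_one (half_pos hη) (by norm_num : (1 / 2 : ℝ) < 1)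
    linarith [dist_triangle_right y x (seq (n + 1)), hsmall n y (hy (n + 1)),
      hsmall n x (hx_mem (n + 1))]
  simp [hyx] at hlt

theorem LowerSemicontinuous.exists_le_add_coe_mul_dist [CompleteSpace α] {f : α → EReal}
    (hf : LowerSemicontinuous f) {B : ℝ} (hB : ∀ x, (B : EReal) ≤ f x) (hε : 0 < ε) {x₀ : α}
    (hx₀ : f x₀ ≠ ⊤) :
    ∃ x, f x ≤ f x₀ ∧ ∀ y, f x ≤ f y + (ε * dist y x : ℝ) := by
  set M := (f x₀).toReal + 1
  have hfx₀ : f x₀ = (M - 1 : ℝ) := by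
    simpa [M] using (EReal.coe_toReal hx₀ (ne_bot_of_le_ne_bot (EReal.coe_ne_bot _) (hB x₀))).symm
  have hBM : B ≤ M := by
    have := hB x₀
    rw [hfx₀, EReal.coe_le_coe_iff] at this
    linarith
  -- truncating `f` to `[B, M]` makes it real-valued; since `f x₀ < M`, an Ekeland point of the
  -- truncation starting from `x₀` is one of `f`
  set clamp : EReal → EReal := fun e => max (min e M) B
  have hclamp_bot : ∀ e, clamp e ≠ ⊥ := fun e =>
    ne_bot_of_le_ne_bot (EReal.coe_ne_bot B) (le_max_right _ _)
  have hclamp_top : ∀ e, clamp e ≠ ⊤ := fun e =>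
    ne_top_of_le_ne_top (EReal.coe_ne_top M)
      (max_le (min_le_right _ _) (EReal.coe_le_coe_iff.2 hBM))
  set F := fun x => (clamp (f x)).toReal
  have hF : ∀ x, (F x : EReal) = clamp (f x) := fun x =>
    EReal.coe_toReal (hclamp_top _) (hclamp_bot _)
  have hFlsc : LowerSemicontinuous F := by
    refine Continuous.comp_lowerSemicontinuous (g := fun e => (clamp e).toReal)
      (EReal.continuousOn_toReal.comp_continuous (by fun_prop)
        fun e => by simp [hclamp_bot e, hclamp_top e]) hf fun e e' h => ?_
    exact EReal.toReal_le_toReal (max_le_max (min_le_min h le_rfl) le_rfl)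
      (hclamp_bot e) (hclamp_top e')
  have hFbdd : BddBelow (range F) :=
    ⟨B, forall_mem_range.2 fun x => EReal.coe_le_coe_iff.1 ((hF x).symm ▸ le_max_right _ _)⟩
  have hclamp_eq : ∀ y, f y < M → clamp (f y) = f y := fun y h => by
    simp only [clamp, min_eq_left h.le, max_eq_left (hB y)]
  obtain ⟨x, hxx₀, hx⟩ := hFlsc.exists_le_add_mul_dist hFbdd hε x₀
  have hFx₀ : F x₀ = M - 1 := by
    rw [← EReal.coe_eq_coe_iff, hF, hclamp_eq _ (by rw [hfx₀]; exact_mod_cast (by linarith)), hfx₀]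
  have hfx : f x = F x := by
    have hlt : clamp (f x) < M := by rw [← hF]; exact_mod_cast (by linarith)
    have : f x < M := (min_lt_iff.1 ((le_max_left _ _).trans_lt hlt)).resolve_right (lt_irrefl _)
    rw [hF, hclamp_eq x this]
  refine ⟨x, ?_, fun y => ?_⟩
  · rw [hfx, hfx₀, ← hFx₀]
    exact_mod_cast hxx₀
  · have hFy : (F y : EReal) ≤ f y := (hF y).symm ▸ max_le (min_le_left _ _) (hB y)
    rw [hfx]
    calc (F x : EReal) ≤ (F y + ε * dist y x : ℝ) := by exact_mod_cast hx y
      _ ≤ f y + (ε * dist y x : ℝ) := by rw [EReal.coe_add]; exact add_le_add hFy le_rfl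

end Ekeland

section Convex

variable {E : Type*} [NormedAddCommGroup E] [NormedSpace ℝ E] {φ : E → EReal}

theorem exists_affine_minorant (hconv : Convex ℝ (realEpigraph φ))
    (hclosed : IsClosed (realEpigraph φ)) (hφ : ProperFn φ) :
    ∃ (g : E →L[ℝ] ℝ) (b : ℝ), ∀ y, ((g y + b : ℝ) : EReal) ≤ φ y := by
  obtain ⟨hbot, x₀, hx₀⟩ := hφ
  set m := (φ x₀).toReal
  have hm : φ x₀ = m := (EReal.coe_toReal hx₀ (hbot x₀)).symm
  have hout : (x₀, m - 1) ∉ realEpigraph φ := by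
    change ¬ φ x₀ ≤ ((m - 1 : ℝ) : EReal)
    rw [hm, EReal.coe_le_coe_iff]
    linarith
  obtain ⟨L, s, hE, hsep⟩ := geometric_hahn_banach_closed_point hconv hclosed hout
  set ℓ := L.comp (ContinuousLinearMap.inl ℝ E ℝ)
  set c := L (0, 1)
  have hE' : ∀ y (t : ℝ), φ y ≤ t → ℓ y + t * c < s := fun y t h => by
    have := hE (y, t) h
    rwa [L.apply_prodMk_real] at this
  rw [L.apply_prodMk_real] at hsep
  have hc : c < 0 := by linarith [hE' x₀ m hm.le]
  refine ⟨(-c⁻¹) • ℓ, s / c, fun y => EReal.coe_le_of_forall_le_coe fun t ht => ?_⟩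
  have : (s - ℓ y) / c < t := (div_lt_iff_of_neg hc).2 (by linarith [hE' y t ht])
  calc ((-c⁻¹) • ℓ) y + s / c = (s - ℓ y) / c := by
        rw [smul_apply, smul_eq_mul]; field_simp [hc.ne]; ring
    _ ≤ t := this.le

theorem exists_affine_between (hconv : Convex ℝ (realEpigraph φ)) {k : E → ℝ}
    (hk : ConcaveOn ℝ univ k) (hkc : Continuous k) (hle : ∀ y, (k y : EReal) ≤ φ y) {x : E}
    (hx : φ x ≠ ⊤) :
    ∃ (g : E →L[ℝ] ℝ) (b : ℝ), ∀ y, k y ≤ g y + b ∧ ((g y + b : ℝ) : EReal) ≤ φ y := by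
  set r := (φ x).toReal
  have hr : φ x = r :=
    (EReal.coe_toReal hx (ne_bot_of_le_ne_bot (EReal.coe_ne_bot _) (hle x))).symm
  set H := {p : E × ℝ | p.2 < k p.1}
  have hHconv : Convex ℝ H := by simpa [H] using hk.convex_strict_hypograph
  have hHopen : IsOpen H := isOpen_lt continuous_snd (hkc.comp continuous_fst)
  have hdisj : Disjoint H (realEpigraph φ) := by
    refine Set.disjoint_left.2 ?_
    rintro ⟨y, t⟩ (hH : t < k y) (hE : φ y ≤ t)
    exact absurd ((hle y).trans hE) (by simpa using hH)
  obtain ⟨L, s, hLH, hLE⟩ := geometric_hahn_banach_open hHconv hHopen hconv hdisj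
  set ℓ := L.comp (ContinuousLinearMap.inl ℝ E ℝ)
  set c := L (0, 1)
  have hE' : ∀ y (t : ℝ), φ y ≤ t → s ≤ ℓ y + t * c := fun y t h => by
    have := hLE (y, t) h
    rwa [L.apply_prodMk_real] at this
  have hH' : ∀ y (t : ℝ), t < k y → ℓ y + t * c < s := fun y t h => by
    have := hLH (y, t) h
    rwa [L.apply_prodMk_real] at this
  -- the separating hyperplane is not vertical because `φ x` is finite
  have hc : 0 < c := by
    have hkr : k x ≤ r := by exact_mod_cast hr ▸ hle x
    nlinarith [hE' x r hr.le, hH' x (k x - 1) (by linarith)]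
  have hgb : ∀ y, ((-c⁻¹) • ℓ) y + s / c = (s - ℓ y) / c := fun y => by
    rw [smul_apply, smul_eq_mul]; field_simp [hc.ne']; ring
  refine ⟨(-c⁻¹) • ℓ, s / c, fun y => ⟨?_, EReal.coe_le_of_forall_le_coe fun t ht => ?_⟩⟩
  · rw [hgb]
    exact le_of_forall_lt fun t ht => (lt_div_iff₀ hc).2 (by linarith [hH' y t ht])
  · rw [hgb]
    exact (div_le_iff₀ hc).2 (by linarith [hE' y t ht])

theorem exists_mem_subdiff_of_forall_add_le (hconv : Convex ℝ (realEpigraph φ)) {h : E → ℝ}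
    (hh : ConvexOn ℝ univ h) (hhc : Continuous h) {x : E} {r : ℝ} (hx : φ x = r)
    (hmin : ∀ y, φ x + h x ≤ φ y + h y) :
    ∃ u : E →L[ℝ] ℝ, (x, u) ∈ subdiff φ ∧ ∀ y, h x - h y ≤ u (y - x) := by
  have hle : ∀ y, ((r + h x - h y : ℝ) : EReal) ≤ φ y := fun y => by
    rw [EReal.coe_sub, EReal.sub_le_iff_le_add (.inl (EReal.coe_ne_bot _))
      (.inl (EReal.coe_ne_top _)), EReal.coe_add, ← hx]
    exact hmin y
  obtain ⟨g, b, hgb⟩ := exists_affine_between hconv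
    ((concaveOn_const _ convex_univ).sub hh) (continuous_const.sub hhc) hle
    (hx ▸ EReal.coe_ne_top r)
  have hgx : g x + b = r :=
    le_antisymm (by exact_mod_cast hx ▸ (hgb x).2) (by simpa using (hgb x).1)
  refine ⟨g, fun y => ?_, fun y => ?_⟩
  · calc ((g (y - x) : ℝ) : EReal) + φ x = ((g y + b : ℝ) : EReal) := by
          rw [hx, ← EReal.coe_add, map_sub]; congr 1; linarith
      _ ≤ φ y := (hgb y).2
  · have := (hgb y).1
    simp only [Pi.sub_apply] at this
    rw [map_sub]; linarith

theorem ContinuousLinearMap.opNorm_le_of_le_mul_norm_add_mul_sq (ℓ : E →L[ℝ] ℝ) {a b : ℝ}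
    (ha : 0 ≤ a) (h : ∀ v, ℓ v ≤ a * ‖v‖ + b * ‖v‖ ^ 2) : ‖ℓ‖ ≤ a := by
  have hlin : ∀ v, ℓ v ≤ a * ‖v‖ := fun v => by
    have hlim : Tendsto (fun t : ℝ => a * ‖v‖ + b * t * ‖v‖ ^ 2) (𝓝[>] 0) (𝓝 (a * ‖v‖)) :=
      (Continuous.tendsto' (by fun_prop) 0 _ (by simp)).mono_left nhdsWithin_le_nhds
    refine ge_of_tendsto hlim (eventually_mem_nhdsWithin.mono fun t (ht : 0 < t) => ?_)
    have := h (t • v)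
    rw [map_smul, smul_eq_mul, norm_smul, Real.norm_of_nonneg ht.le] at this
    exact le_of_mul_le_mul_left (by linarith) ht
  refine ContinuousLinearMap.opNorm_le_bound ℓ ha fun v => abs_le.2 ⟨?_, hlin v⟩
  have := hlin (-v)
  rw [map_neg, norm_neg] at this
  linarith

theorem exists_le_apply_add_norm_sub_sq (ℓ : E →L[ℝ] ℝ) (z : E) :
    ∃ B : ℝ, ∀ y, B ≤ ℓ y + ‖y - z‖ ^ 2 / 2 := by
  refine ⟨ℓ z - ‖ℓ‖ ^ 2 / 2, fun y => ?_⟩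
  have h1 : -(‖ℓ‖ * ‖y - z‖) ≤ ℓ (y - z) := neg_le_of_abs_le (ℓ.le_opNorm _)
  rw [map_sub] at h1
  nlinarith [sq_nonneg (‖y - z‖ - ‖ℓ‖)]

theorem LowerSemicontinuous.isClosed_subdiff (hφ : LowerSemicontinuous φ) :
    IsClosed (subdiff φ) := by
  have hsub : subdiff φ =
      ⋂ y, (fun p : E × (E →L[ℝ] ℝ) => φ p.1 + (p.2 (y - p.1) : EReal)) ⁻¹' Iic (φ y) := by
    ext p
    simp [subdiff, add_comm]
  rw [hsub]
  exact isClosed_iInter fun y =>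
    ((hφ.comp continuous_fst).add_coe (by fun_prop)).isClosed_preimage (φ y)

theorem exists_ekeland_point_of_quadratic_perturbation [CompleteSpace E] (hproper : ProperFn φ)
    (hconv : ERealConvexOn φ) (hlsc : LowerSemicontinuous φ) (z : E) (z' : E →L[ℝ] ℝ) {ε : ℝ}
    (hε : 0 < ε) :
    ∃ x, φ x ≠ ⊤ ∧ ∀ y, φ x + ((‖x - z‖ ^ 2 / 2 - z' x : ℝ) : EReal) ≤
      φ y + ((‖y - z‖ ^ 2 / 2 - z' y + ε * ‖y - x‖ : ℝ) : EReal) := by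
  obtain ⟨g, b, hgb⟩ :=
    exists_affine_minorant hconv.convex_realEpigraph hlsc.isClosed_realEpigraph hproper
  obtain ⟨B, hB⟩ := exists_le_apply_add_norm_sub_sq (g - z') z
  obtain ⟨-, x₀, hx₀⟩ := hproper
  set f := fun y => φ y + ((‖y - z‖ ^ 2 / 2 - z' y : ℝ) : EReal)
  have hfB : ∀ y, ((B + b : ℝ) : EReal) ≤ f y := fun y => by
    calc ((B + b : ℝ) : EReal) ≤ ((g y + b + (‖y - z‖ ^ 2 / 2 - z' y) : ℝ) : EReal) := by
          have := hB y
          rw [sub_apply] at this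
          exact_mod_cast (by linarith)
      _ ≤ f y := by rw [EReal.coe_add]; exact add_le_add (hgb y) le_rfl
  have hflsc : LowerSemicontinuous f := hlsc.add_coe (by fun_prop)
  have hfx₀ : f x₀ ≠ ⊤ := EReal.add_ne_top hx₀ (EReal.coe_ne_top _)
  obtain ⟨x, hxx₀, hx⟩ := hflsc.exists_le_add_coe_mul_dist hfB hε hfx₀
  refine ⟨x, fun htop => hfx₀ (top_le_iff.1 ?_), fun y => ?_⟩
  · rwa [show f x = ⊤ by simp only [f, htop, EReal.top_add_coe]] at hxx₀
  · calc f x ≤ f y + (ε * dist y x : ℝ) := hx y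
      _ = _ := by rw [dist_eq_norm, add_assoc, ← EReal.coe_add]

theorem exists_mem_subdiff_near [CompleteSpace E] (hproper : ProperFn φ) (hconv : ERealConvexOn φ)
    (hlsc : LowerSemicontinuous φ) {z : E} {z' : E →L[ℝ] ℝ}
    (hmono : ∀ q ∈ subdiff φ, 0 ≤ (z' - q.2) (z - q.1)) {ε : ℝ} (hε : 0 < ε) :
    ∃ q ∈ subdiff φ, ‖q.1 - z‖ ≤ 2 * ε ∧ ‖q.2 - z'‖ ≤ 3 * ε := by
  obtain ⟨x, hxtop, hx⟩ := exists_ekeland_point_of_quadratic_perturbation hproper hconv hlsc z z' hε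
  set h : E → ℝ := fun y => ‖y - z‖ ^ 2 / 2 - z' y + ε * ‖y - x‖
  have hh : ConvexOn ℝ univ h := by
    have := ((((convexOn_dist z convex_univ).pow (fun _ _ => dist_nonneg) 2).smul
      (by norm_num : (0 : ℝ) ≤ 1 / 2)).sub (z'.toLinearMap.concaveOn convex_univ)).add
      ((convexOn_dist x convex_univ).smul hε.le)
    refine this.congr fun y _ => ?_
    simp [h, dist_eq_norm]
    ring
  obtain ⟨u, hu, hux⟩ := exists_mem_subdiff_of_forall_add_le hconv.convex_realEpigraph hh
    (by fun_prop) (EReal.coe_toReal hxtop (hproper.1 x)).symm fun y => by simpa [h] using hx y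
  have hdist : ‖x - z‖ ≤ 2 * ε := by
    have hmon := hmono (x, u) hu
    have := hux z
    simp only [h, sub_self, norm_zero, norm_sub_rev z x, map_sub] at this
    simp only [sub_apply, map_sub] at hmon
    nlinarith [norm_nonneg (x - z)]
  have hslope : ‖u - z'‖ ≤ ‖x - z‖ + ε := by
    refine (u - z').opNorm_le_of_le_mul_norm_add_mul_sq (b := 1 / 2) (by positivity) fun v => ?_
    have := hux (x - v)
    have hsq : ‖x - z - v‖ ^ 2 ≤ (‖x - z‖ + ‖v‖) ^ 2 :=
      pow_le_pow_left₀ (norm_nonneg _) (norm_sub_le _ _) 2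
    simp only [h, sub_self, norm_zero, mul_zero, sub_sub_cancel_left, norm_neg,
      sub_right_comm x v z, map_sub, map_neg] at this
    rw [sub_apply]
    nlinarith
  exact ⟨(x, u), hu, hdist, by linarith⟩

end Convex

/-- the subdifferential of a proper convex l.s.c. function is maximal monotone. -/
theorem subdiff_maximalMonotone (φ : X → EReal) (hproper : ProperFn φ)
    (hconv : ERealConvexOn φ) (hlsc : LowerSemicontinuous φ) :
    ∀ p : X × (X →L[ℝ] ℝ),
      (∀ q ∈ subdiff φ, 0 ≤ (p.2 - q.2) (p.1 - q.1)) → p ∈ subdiff φ := by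
  rintro ⟨z, z'⟩ hmono
  rw [← hlsc.isClosed_subdiff.closure_eq, Metric.mem_closure_iff]
  intro δ hδ
  obtain ⟨q, hq, hq₁, hq₂⟩ := exists_mem_subdiff_near hproper hconv hlsc hmono (ε := δ / 4)
    (by positivity)
  refine ⟨q, hq, ?_⟩
  rw [Prod.dist_eq, max_lt_iff, dist_eq_norm, dist_eq_norm, norm_sub_rev, norm_sub_rev z']
  constructor <;> linarith
end
end

section
/- Let X be a reflexive real Banach space and φ : X → (-∞, +∞] proper convex lower semicontinuous. Then for all λ > 0, R(J_X + λ∂φ) = X*: for every z* ∈ X* there exist x₀ ∈ X, y* ∈ J_X(x₀), x* ∈ ∂φ(x₀) with z* = y* + λx*. -/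
noncomputable section

variable {X : Type*} [NormedAddCommGroup X] [NormedSpace ℝ X] [CompleteSpace X]

/-!
Minimize `‖x‖²/2 + λ φ(x) - ⟨x, z*⟩`. Lifted to the epigraph of `φ` this is a continuous convex
function on a closed convex subset of `X × ℝ`; an affine minorant of `φ` makes its sublevel sets
bounded, and bounded closed convex sets are weakly compact in the reflexive space `X × ℝ`, so a
minimizer `(x₀, t₀)` exists. Separating the strict epigraph of `v ↦ ‖x₀ + v‖²/2 - ‖x₀‖²/2` from
the image of the epigraph of `φ` under `(x, t) ↦ (x - x₀, ⟨x - x₀, z*⟩ - λ (t - t₀))` gives a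
subgradient `y*` of `‖·‖²/2` at `x₀`, i.e. `y* ∈ J_X(x₀)`, with `(z* - y*)/λ ∈ ∂φ(x₀)`.
-/

open NormedSpace Set Bornology

theorem ContinuousLinearMap.apply_prod_real {E : Type*} [NormedAddCommGroup E] [NormedSpace ℝ E]
    (f : E × ℝ →L[ℝ] ℝ) (x : E) (t : ℝ) : f (x, t) = f (x, 0) + t * f (0, 1) := by
  rw [← smul_eq_mul, ← map_smul, ← map_add, Prod.smul_mk, smul_zero, smul_eq_mul, mul_one,
    Prod.mk_add_mk, add_zero, zero_add]

theorem le_of_forall_pos_le_add_mul {a b c : ℝ} (h : ∀ t > 0, a ≤ b + t * c) : a ≤ b := by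
  refine ge_of_tendsto (x := nhdsWithin (0 : ℝ) (Ioi 0)) ?_ (eventually_nhdsWithin_of_forall h)
  exact ((by fun_prop : Continuous fun t : ℝ => b + t * c).tendsto' 0 b (by simp)).mono_left
    nhdsWithin_le_nhds

theorem le_add_abs_add_one_of_sq_le {r A B : ℝ} (hA : 0 ≤ A) (h : r ^ 2 ≤ A * r + B) :
    r ≤ A + |B| + 1 := by
  by_contra! hr
  nlinarith [le_abs_self B, abs_nonneg B]

def epigraph {E : Type*} (φ : E → EReal) : Set (E × ℝ) :=
  {p | φ p.1 ≤ p.2}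

theorem ERealConvexOn.convex_epigraph {E : Type*} [AddCommGroup E] [Module ℝ E]
    {φ : E → EReal} (hconv : ERealConvexOn φ) (hbot : ∀ x, φ x ≠ ⊥) :
    Convex ℝ (epigraph φ) := by
  rintro ⟨x, s⟩ (hx : φ x ≤ s) ⟨y, t⟩ (hy : φ y ≤ t) a b ha hb hab
  have hxy := hconv x y a b ha hb hab
  lift φ x to ℝ using ⟨ne_top_of_le_ne_top (EReal.coe_ne_top s) hx, hbot x⟩ with u
  lift φ y to ℝ using ⟨ne_top_of_le_ne_top (EReal.coe_ne_top t) hy, hbot y⟩ with w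
  norm_cast at hx hy hxy
  change φ (a • x + b • y) ≤ ((a * s + b * t : ℝ) : EReal)
  exact hxy.trans (EReal.coe_le_coe_iff.2 (by gcongr))

theorem LowerSemicontinuous.isClosed_epigraph_real {E : Type*} [TopologicalSpace E]
    {φ : E → EReal} (hlsc : LowerSemicontinuous φ) : IsClosed (epigraph φ) :=
  hlsc.isClosed_epigraph.preimage
    (continuous_fst.prodMk (continuous_coe_real_ereal.comp continuous_snd))

section

variable {E : Type*} [NormedAddCommGroup E] [NormedSpace ℝ E]

theorem Convex.isClosed_toWeakSpace_image {s : Set E} (hs : Convex ℝ s) (hc : IsClosed s) :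
    IsClosed (toWeakSpace ℝ E '' s) := by
  rw [← closure_eq_iff_isClosed, ← hs.toWeakSpace_closure ℝ, hc.closure_eq]

theorem Convex.isCompact_toWeakSpace_image
    (hrefl : Function.Surjective (inclusionInDoubleDual ℝ E)) {s : Set E} (hs : Convex ℝ s)
    (hc : IsClosed s) (hb : IsBounded s) : IsCompact (toWeakSpace ℝ E '' s) := by
  have := isCompact_closure_of_isBounded ℝ E (toWeakSpace ℝ E '' s)
    (by rwa [(toWeakSpace ℝ E).injective.preimage_image]) fun F _ => by
      obtain ⟨x, hx⟩ := hrefl F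
      exact ⟨toWeakSpace ℝ E x, hx⟩
  rwa [(hs.isClosed_toWeakSpace_image hc).closure_eq] at this

theorem ConvexOn.lowerSemicontinuous_toWeakSpace {f : E → ℝ} (hf : ConvexOn ℝ univ f)
    (hfc : Continuous f) : LowerSemicontinuous (f ∘ (toWeakSpace ℝ E).symm) := by
  refine lowerSemicontinuous_iff_isClosed_preimage.2 fun c => ?_
  have hconv : Convex ℝ (f ⁻¹' Iic c) := by simpa [preimage, mem_Iic] using hf.convex_le c
  rw [preimage_comp, ← LinearEquiv.image_eq_preimage_symm]
  exact hconv.isClosed_toWeakSpace_image (isClosed_Iic.preimage hfc)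

theorem exists_isMinOn_of_isBounded_sublevel
    (hrefl : Function.Surjective (inclusionInDoubleDual ℝ E)) {C : Set E} (hC : Convex ℝ C)
    (hCc : IsClosed C) {f : E → ℝ} (hf : ConvexOn ℝ univ f) (hfc : Continuous f) {x₁ : E}
    (hx₁ : x₁ ∈ C) (hb : IsBounded {x ∈ C | f x ≤ f x₁}) : ∃ x₀ ∈ C, IsMinOn f C x₀ := by
  set K := {x ∈ C | f x ≤ f x₁}
  have hKc : IsClosed K := hCc.inter (isClosed_le hfc continuous_const)
  have hK : Convex ℝ K := (hf.subset (subset_univ C) hC).convex_le (f x₁)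
  obtain ⟨_, ⟨x₀, hx₀, rfl⟩, hmin⟩ :=
    ((hf.lowerSemicontinuous_toWeakSpace hfc).lowerSemicontinuousOn _).exists_isMinOn
      ⟨_, mem_image_of_mem _ (show x₁ ∈ K from ⟨hx₁, le_rfl⟩)⟩
      (hK.isCompact_toWeakSpace_image hrefl hKc hb)
  refine ⟨x₀, hx₀.1, fun y hy => ?_⟩
  rcases le_or_gt (f y) (f x₁) with hy₁ | hy₁
  · simpa using hmin ⟨y, ⟨hy, hy₁⟩, rfl⟩
  · exact hx₀.2.trans hy₁.le

theorem surjective_inclusionInDoubleDual_prod_real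
    (hrefl : Function.Surjective (inclusionInDoubleDual ℝ E)) :
    Function.Surjective (inclusionInDoubleDual ℝ (E × ℝ)) := by
  intro Φ
  obtain ⟨x, hx⟩ := hrefl (Φ.comp ((ContinuousLinearMap.compL ℝ (E × ℝ) E ℝ).flip
    (ContinuousLinearMap.fst ℝ E ℝ)))
  refine ⟨(x, Φ (ContinuousLinearMap.snd ℝ E ℝ)), ContinuousLinearMap.ext fun f => ?_⟩
  have hf : f = (f.comp (ContinuousLinearMap.inl ℝ E ℝ)).comp (ContinuousLinearMap.fst ℝ E ℝ)
      + f (0, 1) • ContinuousLinearMap.snd ℝ E ℝ :=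
    ContinuousLinearMap.ext fun p => by simpa [mul_comm] using f.apply_prod_real p.1 p.2
  have hxf := congr($hx (f.comp (ContinuousLinearMap.inl ℝ E ℝ)))
  simp only [dual_def] at hxf ⊢
  conv_rhs => rw [hf]
  rw [map_add, map_smul, f.apply_prod_real]
  simpa [mul_comm] using hxf

theorem ProperFn.exists_affine_minorant {φ : E → EReal} (hproper : ProperFn φ)
    (hconv : ERealConvexOn φ) (hlsc : LowerSemicontinuous φ) :
    ∃ (g : E →L[ℝ] ℝ) (c : ℝ), ∀ p ∈ epigraph φ, g p.1 + c ≤ p.2 := by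
  obtain ⟨hbot, x₁, hx₁⟩ := hproper
  set r₁ := (φ x₁).toReal
  have hr₁ : φ x₁ = r₁ := (EReal.coe_toReal hx₁ (hbot x₁)).symm
  have hbelow : (x₁, r₁ - 1) ∉ epigraph φ := fun h => by
    have : (r₁ : EReal) ≤ (r₁ - 1 : ℝ) := hr₁ ▸ h
    norm_cast at this
    linarith
  obtain ⟨f, u, hfE, hfu⟩ := geometric_hahn_banach_closed_point
    (hconv.convex_epigraph hbot) hlsc.isClosed_epigraph_real hbelow
  have hβ : f (0, 1) < 0 := by
    have := (hfE (x₁, r₁) hr₁.le).trans hfu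
    rw [f.apply_prod_real x₁ r₁, f.apply_prod_real x₁ (r₁ - 1)] at this
    linarith
  refine ⟨-(f (0, 1))⁻¹ • f.comp (ContinuousLinearMap.inl ℝ E ℝ), u / f (0, 1),
    fun p hp => ?_⟩
  have := hfE p hp
  rw [f.apply_prod_real] at this
  change -(f (0, 1))⁻¹ * f (p.1, 0) + u / f (0, 1) ≤ p.2
  calc -(f (0, 1))⁻¹ * f (p.1, 0) + u / f (0, 1) = (u - f (p.1, 0)) / f (0, 1) := by ring
    _ ≤ p.2 := by rw [div_le_iff_of_neg hβ]; linarith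

theorem convexOn_half_sq_norm : ConvexOn ℝ univ fun x : E => ‖x‖ ^ 2 / 2 := by
  simpa [div_eq_inv_mul] using
    ((convexOn_norm convex_univ).pow (fun _ _ => norm_nonneg _) 2).smul
      (by norm_num : (0 : ℝ) ≤ 2⁻¹)

/-- The objective `‖x‖²/2 + λ φ(x) - ⟨x, z*⟩`, lifted to the epigraph of `φ` so that it is
real-valued, convex and continuous. -/
def epigraphObjective (lam : ℝ) (z' : E →L[ℝ] ℝ) (p : E × ℝ) : ℝ :=
  ‖p.1‖ ^ 2 / 2 + lam * p.2 - z' p.1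

theorem continuous_epigraphObjective (lam : ℝ) (z' : E →L[ℝ] ℝ) :
    Continuous (epigraphObjective lam z') := by
  unfold epigraphObjective
  fun_prop

theorem convexOn_epigraphObjective (lam : ℝ) (z' : E →L[ℝ] ℝ) :
    ConvexOn ℝ univ (epigraphObjective lam z') :=
  ((convexOn_half_sq_norm.comp_linearMap (LinearMap.fst ℝ E ℝ)).add
    ((lam • LinearMap.snd ℝ E ℝ).convexOn convex_univ)).sub
    ((z'.toLinearMap.comp (LinearMap.fst ℝ E ℝ)).concaveOn convex_univ)

theorem isBounded_epigraph_inter_sublevel {φ : E → EReal} {g : E →L[ℝ] ℝ} {c : ℝ}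
    (hgc : ∀ p ∈ epigraph φ, g p.1 + c ≤ p.2) {lam : ℝ} (hlam : 0 < lam) (z' : E →L[ℝ] ℝ)
    (c₀ : ℝ) : IsBounded {p ∈ epigraph φ | epigraphObjective lam z' p ≤ c₀} := by
  set M := 2 * (lam * ‖g‖ + ‖z'‖) + |2 * (c₀ - lam * c)| + 1
  refine (Metric.isBounded_closedBall (x := (0 : E)) (r := M)).prod
    (Metric.isBounded_Icc (c - ‖g‖ * M) ((c₀ + ‖z'‖ * M) / lam)) |>.subset ?_
  rintro ⟨x, t⟩ ⟨hp, hobj⟩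
  have hmin := hgc _ hp
  have hg : -(‖g‖ * ‖x‖) ≤ g x := neg_le_of_abs_le (g.le_opNorm x)
  have hz : z' x ≤ ‖z'‖ * ‖x‖ := (le_abs_self _).trans (z'.le_opNorm x)
  simp only [epigraphObjective] at hmin hobj
  have hxM : ‖x‖ ≤ M := le_add_abs_add_one_of_sq_le (by positivity) (by nlinarith)
  refine ⟨mem_closedBall_zero_iff.2 hxM, ?_, ?_⟩
  · nlinarith [norm_nonneg g]
  · rw [le_div_iff₀ hlam]
    nlinarith [norm_nonneg z', sq_nonneg ‖x‖]

theorem exists_isMinOn_epigraphObjective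
    (hrefl : Function.Surjective (inclusionInDoubleDual ℝ E)) {φ : E → EReal}
    (hproper : ProperFn φ) (hconv : ERealConvexOn φ) (hlsc : LowerSemicontinuous φ)
    {lam : ℝ} (hlam : 0 < lam) (z' : E →L[ℝ] ℝ) :
    ∃ p₀ ∈ epigraph φ, IsMinOn (epigraphObjective lam z') (epigraph φ) p₀ := by
  obtain ⟨g, c, hgc⟩ := hproper.exists_affine_minorant hconv hlsc
  obtain ⟨hbot, x₁, hx₁⟩ := hproper
  exact exists_isMinOn_of_isBounded_sublevel (surjective_inclusionInDoubleDual_prod_real hrefl)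
    (hconv.convex_epigraph hbot) hlsc.isClosed_epigraph_real (convexOn_epigraphObjective lam z')
    (continuous_epigraphObjective lam z')
    (show (x₁, (φ x₁).toReal) ∈ epigraph φ from (EReal.coe_toReal hx₁ (hbot x₁)).ge)
    (isBounded_epigraph_inter_sublevel hgc hlam z' _)

theorem exists_clm_sandwich {q : E → ℝ} (hq : ConvexOn ℝ univ q) (hqc : Continuous q)
    (hq0 : q 0 = 0) {B : Set (E × ℝ)} (hB : Convex ℝ B) (hB0 : (0, 0) ∈ B)
    (hBq : ∀ p ∈ B, p.2 ≤ q p.1) :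
    ∃ ℓ : E →L[ℝ] ℝ, (∀ v, ℓ v ≤ q v) ∧ ∀ p ∈ B, p.2 ≤ ℓ p.1 := by
  have hA : Convex ℝ {p : E × ℝ | q p.1 < p.2} := by simpa using hq.convex_strict_epigraph
  obtain ⟨f, u, hfA, hfB⟩ := geometric_hahn_banach_open hA
    (isOpen_lt (hqc.comp continuous_fst) continuous_snd) hB
    (disjoint_left.2 fun p hpA hpB => (hBq p hpB).not_gt hpA)
  have hvert : ∀ r > 0, r * f (0, 1) < u := fun r hr => by
    simpa [f.apply_prod_real 0 r, Prod.mk_zero_zero] using hfA (0, r) (by simpa [hq0])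
  have hu : u ≤ 0 := by simpa [Prod.mk_zero_zero] using hfB _ hB0
  have hα : f (0, 1) < 0 := by linarith [hvert 1 one_pos]
  have hu' : 0 ≤ u := by
    by_contra! hu'
    have := hvert (u / f (0, 1)) (div_pos_of_neg_of_neg hu' hα)
    rw [div_mul_cancel₀ _ hα.ne] at this
    exact this.false
  set ℓ := (-f (0, 1))⁻¹ • f.comp (ContinuousLinearMap.inl ℝ E ℝ)
  have hℓ : ∀ v, ℓ v = (-f (0, 1))⁻¹ * f (v, 0) := fun v => rfl
  refine ⟨ℓ, fun v => le_of_forall_gt fun r hr => ?_, fun p hp => ?_⟩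
  · have := hfA (v, r) hr
    rw [f.apply_prod_real] at this
    rw [hℓ, inv_mul_lt_iff₀ (by linarith)]
    linarith
  · have := hfB p hp
    rw [f.apply_prod_real] at this
    rw [hℓ, le_inv_mul_iff₀ (by linarith)]
    linarith

theorem mem_dualityMap_of_forall_le {x₀ : E} {ℓ : E →L[ℝ] ℝ}
    (h : ∀ v, ℓ v ≤ ‖x₀ + v‖ ^ 2 / 2 - ‖x₀‖ ^ 2 / 2) : ℓ ∈ dualityMap x₀ := by
  have hbound : ∀ v, ℓ v ≤ ‖x₀‖ * ‖v‖ := fun v =>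
    le_of_forall_pos_le_add_mul (c := ‖v‖ ^ 2 / 2) fun t ht => by
      have h1 := h (t • v)
      have h2 : ‖x₀ + t • v‖ ≤ ‖x₀‖ + t * ‖v‖ := by
        simpa [norm_smul, abs_of_pos ht] using norm_add_le x₀ (t • v)
      have h3 := pow_le_pow_left₀ (norm_nonneg _) h2 2
      rw [map_smul, smul_eq_mul] at h1
      nlinarith
  have hnorm : ‖ℓ‖ ≤ ‖x₀‖ := by
    refine ℓ.opNorm_le_bound (norm_nonneg _) fun v => abs_le.2 ⟨?_, hbound v⟩
    have := hbound (-v)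
    rw [map_neg, norm_neg] at this
    linarith
  have hge : ‖x₀‖ ^ 2 ≤ ℓ x₀ :=
    le_of_forall_pos_le_add_mul (c := ‖x₀‖ ^ 2 / 2) fun t ht => by
      have h1 := h (-t • x₀)
      rw [show x₀ + -t • x₀ = (1 - t) • x₀ by module, norm_smul, mul_pow, Real.norm_eq_abs,
        sq_abs, map_smul, smul_eq_mul] at h1
      nlinarith
  have hle : ℓ x₀ ≤ ‖ℓ‖ * ‖x₀‖ := (le_abs_self _).trans (ℓ.le_opNorm x₀)
  refine ⟨by nlinarith [norm_nonneg x₀], ?_⟩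
  nlinarith [norm_nonneg x₀, norm_nonneg ℓ]

theorem mem_subdiff_of_forall_epigraph {φ : E → EReal} (hbot : ∀ x, φ x ≠ ⊥) {x₀ : E}
    {t₀ : ℝ} {x' : E →L[ℝ] ℝ} (h₀ : φ x₀ ≤ t₀)
    (h : ∀ p ∈ epigraph φ, x' (p.1 - x₀) ≤ p.2 - t₀) : (x₀, x') ∈ subdiff φ := by
  intro y
  rcases eq_or_ne (φ y) ⊤ with hy | hy
  · simp [hy]
  have hφy := EReal.coe_toReal hy (hbot y)
  have := h (y, (φ y).toReal) hφy.ge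
  calc ((x' (y - x₀) : ℝ) : EReal) + φ x₀ ≤ ((x' (y - x₀) + t₀ : ℝ) : EReal) := by
        rw [EReal.coe_add]; gcongr
    _ ≤ φ y := by rw [← hφy]; norm_cast; linarith

theorem exists_mem_dualityMap_of_isMinOn {φ : E → EReal} (hconv : ERealConvexOn φ)
    (hbot : ∀ x, φ x ≠ ⊥) {lam : ℝ} (hlam : 0 < lam) (z' : E →L[ℝ] ℝ) {x₀ : E} {t₀ : ℝ}
    (hp₀ : (x₀, t₀) ∈ epigraph φ)
    (hmin : IsMinOn (epigraphObjective lam z') (epigraph φ) (x₀, t₀)) :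
    ∃ ℓ ∈ dualityMap x₀, (x₀, lam⁻¹ • (z' - ℓ)) ∈ subdiff φ := by
  set L : E × ℝ →ₗ[ℝ] E × ℝ := (LinearMap.fst ℝ E ℝ).prod
    (z'.toLinearMap.comp (LinearMap.fst ℝ E ℝ) - lam • LinearMap.snd ℝ E ℝ)
  have hL : ∀ p : E × ℝ, L (-(x₀, t₀) + p) = (p.1 - x₀, z' (p.1 - x₀) - lam * (p.2 - t₀)) :=
    fun p => by simp [L, neg_add_eq_sub]
  have hq : ConvexOn ℝ univ fun v : E => ‖x₀ + v‖ ^ 2 / 2 - ‖x₀‖ ^ 2 / 2 := by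
    simp only [sub_eq_add_neg]
    exact (convexOn_half_sq_norm.translate_right x₀).add_const _
  have hBq : ∀ p ∈ L '' ((fun p => -(x₀, t₀) + p) '' epigraph φ),
      p.2 ≤ ‖x₀ + p.1‖ ^ 2 / 2 - ‖x₀‖ ^ 2 / 2 := by
    rintro _ ⟨_, ⟨p, hp, rfl⟩, rfl⟩
    have := isMinOn_iff.1 hmin p hp
    rw [hL, add_sub_cancel, map_sub]
    simp only [epigraphObjective] at this
    linarith
  obtain ⟨ℓ, hℓq, hℓB⟩ := exists_clm_sandwich hq (by fun_prop) (by simp)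
    (((hconv.convex_epigraph hbot).translate (-(x₀, t₀))).linear_image L)
    ⟨0, ⟨(x₀, t₀), hp₀, neg_add_cancel _⟩, map_zero L⟩ hBq
  refine ⟨ℓ, mem_dualityMap_of_forall_le hℓq, mem_subdiff_of_forall_epigraph hbot hp₀
    fun p hp => ?_⟩
  have := hℓB _ ⟨_, ⟨p, hp, rfl⟩, rfl⟩
  rw [hL] at this
  change lam⁻¹ * (z' - ℓ) (p.1 - x₀) ≤ p.2 - t₀
  rw [inv_mul_le_iff₀ hlam, sub_apply]
  linarith

end

/-- if `X` is reflexive then `R(J_X + λ∂φ) = X*`. -/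
theorem surjectivity_subdiff
    (hrefl : Function.Surjective (NormedSpace.inclusionInDoubleDual ℝ X))
    (φ : X → EReal) (hproper : ProperFn φ)
    (hconv : ERealConvexOn φ) (hlsc : LowerSemicontinuous φ) :
    ∀ lam : ℝ, 0 < lam → ∀ z' : X →L[ℝ] ℝ,
      ∃ (x₀ : X) (y' x' : X →L[ℝ] ℝ),
        y' ∈ dualityMap x₀ ∧ (x₀, x') ∈ subdiff φ ∧ z' = y' + lam • x' := by
  intro lam hlam z'
  obtain ⟨⟨x₀, t₀⟩, hp₀, hmin⟩ :=
    exists_isMinOn_epigraphObjective hrefl hproper hconv hlsc hlam z'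
  obtain ⟨ℓ, hℓ, hsub⟩ := exists_mem_dualityMap_of_isMinOn hconv hproper.1 hlam z' hp₀ hmin
  refine ⟨x₀, ℓ, lam⁻¹ • (z' - ℓ), hℓ, hsub, ?_⟩
  rw [smul_smul, mul_inv_cancel₀ hlam.ne', one_smul, add_sub_cancel]
end
end

section
/- Let A : X ⇉ X* be a proper monotone operator. Then its Fitzpatrick function H_A(x, x*) = sup{⟨u, x*⟩ + ⟨x, u*⟩ - ⟨u, u*⟩ : (u, u*) ∈ A} is a proper convex lower semicontinuous function on X × X*, and H_A(x, x*) = ⟨x, x*⟩ for all (x, x*) ∈ A. -/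
noncomputable section

variable {X : Type*} [NormedAddCommGroup X] [NormedSpace ℝ X] [CompleteSpace X]

/-!
`H_A` is a pointwise supremum of the continuous affine functions
`(x, x*) ↦ ⟨u, x*⟩ + ⟨x, u*⟩ - ⟨u, u*⟩`, `(u, u*) ∈ A`, hence convex and lower semicontinuous,
and it is `> -∞` as soon as `A` is nonempty. On the graph, monotonicity says exactly that each of
these functions is at most `⟨x, x*⟩` at `(x, x*)`, with equality for `(u, u*) = (x, x*)`.
-/

open Set

section ERealConvex

variable {E : Type*} [AddCommGroup E] [Module ℝ E]

theorem ConvexOn.erealConvexOn_coe {f : E → ℝ} (hf : ConvexOn ℝ univ f) :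
    ERealConvexOn fun x => (f x : EReal) := by
  intro x y a b ha hb hab
  rw [← EReal.coe_mul, ← EReal.coe_mul, ← EReal.coe_add, EReal.coe_le_coe_iff]
  exact hf.2 (mem_univ x) (mem_univ y) ha hb hab

theorem ERealConvexOn.biSup {ι : Type*} {s : Set ι} {f : ι → E → EReal}
    (hf : ∀ i ∈ s, ERealConvexOn (f i)) : ERealConvexOn fun x => ⨆ i ∈ s, f i x := by
  intro x y a b ha hb hab
  refine iSup₂_le fun i hi => (hf i hi x y a b ha hb hab).trans ?_
  exact add_le_add
    (mul_le_mul_of_nonneg_left (le_iSup₂ (f := fun i _ => f i x) i hi) (EReal.coe_nonneg.2 ha))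
    (mul_le_mul_of_nonneg_left (le_iSup₂ (f := fun i _ => f i y) i hi) (EReal.coe_nonneg.2 hb))

end ERealConvex

section Fitzpatrick

omit [CompleteSpace X]

-- `(x, x*) ↦ ⟨u, x*⟩ + ⟨x, u*⟩` for `q = (u, u*)`
def fitzCoupling (q : X × (X →L[ℝ] ℝ)) : X × (X →L[ℝ] ℝ) →L[ℝ] ℝ :=
  (ContinuousLinearMap.apply ℝ ℝ q.1).comp (ContinuousLinearMap.snd ℝ X (X →L[ℝ] ℝ)) +
    q.2.comp (ContinuousLinearMap.fst ℝ X (X →L[ℝ] ℝ))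

theorem fitz_eq_biSup_fitzCoupling (A : Set (X × (X →L[ℝ] ℝ))) :
    fitz A = fun p => ⨆ q ∈ A, ((fitzCoupling q p - q.2 q.1 : ℝ) : EReal) :=
  rfl

theorem le_fitz {A : Set (X × (X →L[ℝ] ℝ))} {q : X × (X →L[ℝ] ℝ)} (hq : q ∈ A)
    (p : X × (X →L[ℝ] ℝ)) :
    ((p.2 q.1 + q.2 p.1 - q.2 q.1 : ℝ) : EReal) ≤ fitz A p :=
  le_iSup₂ (f := fun q (_ : q ∈ A) => ((p.2 q.1 + q.2 p.1 - q.2 q.1 : ℝ) : EReal)) q hq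

theorem fitz_ne_bot {A : Set (X × (X →L[ℝ] ℝ))} (hA : A.Nonempty) (p : X × (X →L[ℝ] ℝ)) :
    fitz A p ≠ ⊥ := by
  obtain ⟨q, hq⟩ := hA
  exact ne_bot_of_le_ne_bot (EReal.coe_ne_bot _) (le_fitz hq p)

theorem fitz_eq_of_mem {A : Set (X × (X →L[ℝ] ℝ))} (hA : MonotoneSet A) {p : X × (X →L[ℝ] ℝ)}
    (hp : p ∈ A) :
    fitz A p = ((p.2 p.1 : ℝ) : EReal) := by
  refine le_antisymm (iSup₂_le fun q hq => ?_) (by simpa using le_fitz hp p)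
  have hpq := hA p hp q hq
  simp only [sub_apply, map_sub] at hpq
  exact EReal.coe_le_coe_iff.2 (by linarith)

theorem fitz_erealConvexOn (A : Set (X × (X →L[ℝ] ℝ))) : ERealConvexOn (fitz A) := by
  rw [fitz_eq_biSup_fitzCoupling]
  refine ERealConvexOn.biSup fun q _ => ConvexOn.erealConvexOn_coe ?_
  exact ((fitzCoupling q).toLinearMap.convexOn convex_univ).sub (concaveOn_const _ convex_univ)

theorem fitz_lowerSemicontinuous (A : Set (X × (X →L[ℝ] ℝ))) :
    LowerSemicontinuous (fitz A) := by
  rw [fitz_eq_biSup_fitzCoupling]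
  exact lowerSemicontinuous_biSup fun q _ => (continuous_coe_real_ereal.comp
    ((fitzCoupling q).continuous.sub continuous_const)).lowerSemicontinuous

end Fitzpatrick

/-- the Fitzpatrick function of a proper monotone operator is proper convex
l.s.c. on `X × X*` and coincides with the duality pairing on the graph of `A`. -/
theorem fitz_basic (A : Set (X × (X →L[ℝ] ℝ))) (hne : A.Nonempty)
    (hmono : MonotoneSet A) :
    ProperFn (fitz A) ∧ ERealConvexOn (fitz A) ∧ LowerSemicontinuous (fitz A) ∧
      ∀ p ∈ A, fitz A p = ((p.2 p.1 : ℝ) : EReal) := by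
  obtain ⟨q, hq⟩ := hne
  refine ⟨⟨fitz_ne_bot ⟨q, hq⟩, q, ?_⟩, fitz_erealConvexOn A, fitz_lowerSemicontinuous A,
    fun p hp => fitz_eq_of_mem hmono hp⟩
  rw [fitz_eq_of_mem hmono hq]
  exact EReal.coe_ne_top _
end
end

section
/- Let A : X ⇉ X* be a maximal monotone operator with Fitzpatrick function H. Then (x, x*) ∈ A if and only if H(x, x*) = ⟨x, x*⟩. -/
noncomputable section

variable {X : Type*} [NormedAddCommGroup X] [NormedSpace ℝ X] [CompleteSpace X]

section

variable {E : Type*} [NormedAddCommGroup E] [NormedSpace ℝ E]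

lemma fitz_summand_eq_sub (p q : E × (E →L[ℝ] ℝ)) :
    p.2 q.1 + q.2 p.1 - q.2 q.1 = p.2 p.1 - (p.2 - q.2) (p.1 - q.1) := by
  simp only [sub_apply, map_sub]
  ring

lemma fitz_le_pairing_iff (A : Set (E × (E →L[ℝ] ℝ))) (p : E × (E →L[ℝ] ℝ)) :
    fitz A p ≤ ((p.2 p.1 : ℝ) : EReal) ↔ ∀ q ∈ A, 0 ≤ (p.2 - q.2) (p.1 - q.1) := by
  simp only [fitz, iSup₂_le_iff, EReal.coe_le_coe_iff, fitz_summand_eq_sub, sub_le_self_iff]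

lemma pairing_le_fitz_of_mem {A : Set (E × (E →L[ℝ] ℝ))} {p : E × (E →L[ℝ] ℝ)} (hp : p ∈ A) :
    ((p.2 p.1 : ℝ) : EReal) ≤ fitz A p :=
  le_iSup₂_of_le p hp (by simp)

end

/-- for a maximal monotone operator, `(x, x*) ∈ A ↔ H(x, x*) = ⟨x, x*⟩`. -/
theorem mem_iff_fitz_eq (A : Set (X × (X →L[ℝ] ℝ))) (hA : MaximalMonotoneSet A) :
    ∀ p : X × (X →L[ℝ] ℝ), p ∈ A ↔ fitz A p = ((p.2 p.1 : ℝ) : EReal) :=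
  fun p =>
    ⟨fun hp => le_antisymm ((fitz_le_pairing_iff A p).2 (hA.1 p hp)) (pairing_le_fitz_of_mem hp),
      fun h => hA.2 p ((fitz_le_pairing_iff A p).1 h.le)⟩
end
end

section
/- Let A : X ⇉ X* be a maximal monotone operator with Fitzpatrick function H. If (x*, x) ∈ ∂H(u, u*) for some (u, u*), then ⟨u - x, u* - x*⟩ ≤ inf{⟨z - x, z* - x*⟩ : (z, z*) ∈ A}. -/
noncomputable section

variable {X : Type*} [NormedAddCommGroup X] [NormedSpace ℝ X] [CompleteSpace X]

section

variable {E : Type*} [NormedAddCommGroup E] [NormedSpace ℝ E] {A : Set (E × (E →L[ℝ] ℝ))}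

theorem pairing_sub_sub_eq (p q : E × (E →L[ℝ] ℝ)) :
    (p.2 - q.2) (p.1 - q.1) = p.2 p.1 - (p.2 q.1 + q.2 p.1 - q.2 q.1) := by
  simp only [sub_apply, map_sub]
  ring

theorem MonotoneSet.fitz_le (hA : MonotoneSet A)
    {q : E × (E →L[ℝ] ℝ)} (hq : q ∈ A) : fitz A q ≤ ((q.2 q.1 : ℝ) : EReal) :=
  iSup₂_le fun r hr ↦ EReal.coe_le_coe_iff.mpr <| by
    linarith [pairing_sub_sub_eq q r, hA q hq r hr]

/-- If `H(p) < ⟨p.1, p.2⟩`, then `p` is monotonically related to all of `A`, hence lies in `A`,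
and then `H(p) ≥ ⟨p.1, p.2⟩` by taking `p` itself in the supremum. -/
theorem MaximalMonotoneSet.le_fitz (hA : MaximalMonotoneSet A)
    (p : E × (E →L[ℝ] ℝ)) : ((p.2 p.1 : ℝ) : EReal) ≤ fitz A p := by
  by_contra! hlt
  have term_lt {q} (hq : q ∈ A) : p.2 q.1 + q.2 p.1 - q.2 q.1 < p.2 p.1 :=
    EReal.coe_lt_coe_iff.mp <| (le_iSup₂_of_le q hq le_rfl).trans_lt hlt
  have hp : p ∈ A := hA.2 p fun q hq ↦ by linarith [pairing_sub_sub_eq p q, term_lt hq]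
  exact (term_lt hp).ne (by ring)

end

/-- if `(x*, x) ∈ ∂H(u, u*)` then
`⟨u - x, u* - x*⟩ ≤ inf {⟨z - x, z* - x*⟩ : (z, z*) ∈ A}`. -/
theorem subdiffFitz_ineq (A : Set (X × (X →L[ℝ] ℝ))) (hA : MaximalMonotoneSet A)
    (u : X) (u' : X →L[ℝ] ℝ) (x : X) (x' : X →L[ℝ] ℝ)
    (h : inSubdiffFitz A u u' x' x) :
    ∀ q ∈ A, (u' - x') (u - x) ≤ (q.2 - x') (q.1 - x) := by
  intro q hq
  have key : x' (q.1 - u) + (q.2 - u') x + u' u ≤ q.2 q.1 := by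
    rw [← EReal.coe_le_coe_iff, EReal.coe_add]
    calc ((x' (q.1 - u) + (q.2 - u') x : ℝ) : EReal) + ((u' u : ℝ) : EReal)
        ≤ ((x' (q.1 - u) + (q.2 - u') x : ℝ) : EReal) + fitz A (u, u') :=
          add_le_add_right (hA.le_fitz (u, u')) _
      _ ≤ fitz A q := h q.1 q.2
      _ ≤ ((q.2 q.1 : ℝ) : EReal) := hA.1.fitz_le hq
  simp only [sub_apply, map_sub] at key ⊢
  linarith
end
end

section
/- Let X be a real Banach space and A : X ⇉ X* a maximal monotone operator with Fitzpatrick function H_A. Then 0 ∈ R(J_X + A) if and only if (0, 0) ∈ R(J_X ⊗ J_X^{-1} + ∂H_A), where (J_X ⊗ J_X^{-1})(x, x*) = J_X(x) × J_X^{-1}(x*). -/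
/-!
On a maximal monotone `A` the Fitzpatrick function dominates the pairing, `H_A(z, z*) ≥ ⟨z, z*⟩`,
with equality on the graph of `A`. Hence if `x* ∈ J(x)` and `-x* ∈ A x`, then `-x* ∈ J(-x)` and
`(-x*, x) ∈ ∂H_A(x, -x*)`.

Conversely, let `p ∈ J(x)`, `x* ∈ J(q)` and `(-p, -q) ∈ ∂H_A(x, x*)`. Sandwiching `H_A` turns the
subgradient inequality into `⟨q + z, p + z*⟩ ≥ ⟨q, p⟩ + ⟨x, p⟩ + ⟨q, x*⟩ + ⟨x, x*⟩` for
`(z, z*) ∈ A`, and the right side is at least `(‖x‖ - ‖q‖)² ≥ 0`. By maximality `(-q, -p) ∈ A`,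
and testing the inequality at this point forces `‖x‖ = ‖q‖` and `⟨q, p⟩ = -‖q‖²`, i.e.
`p ∈ J(-q)`: so `-q` solves `0 ∈ J(-q) + A(-q)`.
-/

noncomputable section

variable {X : Type*} [NormedAddCommGroup X] [NormedSpace ℝ X] [CompleteSpace X]

section

variable {E : Type*} [NormedAddCommGroup E] [NormedSpace ℝ E]
  {A : Set (E × (E →L[ℝ] ℝ))} {x q : E} {p x' : E →L[ℝ] ℝ}

theorem le_fitz_of_mem {r : E × (E →L[ℝ] ℝ)} (hr : r ∈ A) (s : E × (E →L[ℝ] ℝ)) :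
    ((s.2 r.1 + r.2 s.1 - r.2 r.1 : ℝ) : EReal) ≤ fitz A s :=
  le_biSup (fun r => ((s.2 r.1 + r.2 s.1 - r.2 r.1 : ℝ) : EReal)) hr

theorem MonotoneSet.fitz_le_apply (hA : MonotoneSet A) (hx : (x, x') ∈ A) :
    fitz A (x, x') ≤ ((x' x : ℝ) : EReal) := by
  refine iSup₂_le fun ⟨u, u'⟩ hu => EReal.coe_le_coe_iff.mpr ?_
  have := hA _ hx _ hu
  simp only [sub_apply, map_sub] at this
  linarith

theorem MaximalMonotoneSet.apply_le_fitz (hA : MaximalMonotoneSet A) (z : E) (z' : E →L[ℝ] ℝ) :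
    ((z' z : ℝ) : EReal) ≤ fitz A (z, z') := by
  by_contra! h
  have hz : (z, z') ∈ A := hA.2 _ fun ⟨u, u'⟩ hu => by
    have := EReal.coe_lt_coe_iff.mp ((le_fitz_of_mem hu (z, z')).trans_lt h)
    simp only [sub_apply, map_sub]
    linarith
  simpa using (le_fitz_of_mem hz (z, z')).trans_lt h

theorem neg_mem_dualityMap_neg (h : x' ∈ dualityMap x) : -x' ∈ dualityMap (-x) := by
  simpa [dualityMap] using h

theorem norm_eq_of_mem_dualityMap (h : x' ∈ dualityMap x) : ‖x'‖ = ‖x‖ := by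
  have := h.2
  rwa [sq_eq_sq₀ (norm_nonneg x) (norm_nonneg x'), eq_comm] at this

theorem inSubdiffFitz_of_mem (hA : MonotoneSet A) (hx : (x, x') ∈ A) :
    inSubdiffFitz A x x' x' x := by
  intro z z'
  calc ((x' (z - x) + (z' - x') x : ℝ) : EReal) + fitz A (x, x')
      ≤ ((x' (z - x) + (z' - x') x : ℝ) : EReal) + ((x' x : ℝ) : EReal) := by
        gcongr
        exact hA.fitz_le_apply hx
    _ = ((z' x + x' z - x' x : ℝ) : EReal) := by
        norm_cast
        simp only [map_sub, sub_apply]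
        ring
    _ ≤ fitz A (z, z') := le_fitz_of_mem hx (z, z')

theorem MaximalMonotoneSet.apply_le_of_inSubdiffFitz (hA : MaximalMonotoneSet A)
    {w : E} {w' : E →L[ℝ] ℝ} (h : inSubdiffFitz A x x' w' w) {z : E} {z' : E →L[ℝ] ℝ}
    (hz : (z, z') ∈ A) : w' (z - x) + (z' - x') w + x' x ≤ z' z := by
  have : ((w' (z - x) + (z' - x') w : ℝ) : EReal) + ((x' x : ℝ) : EReal) ≤ ((z' z : ℝ) : EReal) :=
    calc _ ≤ ((w' (z - x) + (z' - x') w : ℝ) : EReal) + fitz A (x, x') := by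
          gcongr
          exact hA.apply_le_fitz x x'
      _ ≤ fitz A (z, z') := h z z'
      _ ≤ _ := hA.1.fitz_le_apply hz
  exact_mod_cast this

theorem neg_norm_mul_norm_le_apply (f : E →L[ℝ] ℝ) (v : E) : -(‖f‖ * ‖v‖) ≤ f v :=
  neg_le_of_abs_le (f.le_opNorm v)

theorem sq_norm_sub_norm_le_of_mem_dualityMap (hp : p ∈ dualityMap x) (hx' : x' ∈ dualityMap q) :
    (‖x‖ - ‖q‖) ^ 2 ≤ p q + p x + x' q + x' x := by
  have hpq := neg_norm_mul_norm_le_apply p q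
  have hx'x := neg_norm_mul_norm_le_apply x' x
  rw [norm_eq_of_mem_dualityMap hp] at hpq
  rw [norm_eq_of_mem_dualityMap hx'] at hx'x
  nlinarith [hp.1, hx'.1]

theorem mem_dualityMap_neg_of_le_zero (hp : p ∈ dualityMap x) (hx' : x' ∈ dualityMap q)
    (h : p q + p x + x' q + x' x ≤ 0) : p ∈ dualityMap (-q) := by
  have hxq : ‖x‖ = ‖q‖ := by
    nlinarith [sq_norm_sub_norm_le_of_mem_dualityMap hp hx', sq_nonneg (‖x‖ - ‖q‖)]
  have hpx := norm_eq_of_mem_dualityMap hp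
  have hpq := neg_norm_mul_norm_le_apply p q
  have hx'x := neg_norm_mul_norm_le_apply x' x
  rw [hpx, hxq] at hpq
  rw [norm_eq_of_mem_dualityMap hx', hxq] at hx'x
  refine ⟨?_, by rw [norm_neg, hpx, hxq]⟩
  rw [map_neg, norm_neg]
  have hpx' : p x = ‖q‖ ^ 2 := by rw [hp.1, hxq]
  nlinarith [hx'.1]

theorem MaximalMonotoneSet.neg_mem_and_mem_dualityMap_of_inSubdiffFitz (hA : MaximalMonotoneSet A)
    (hp : p ∈ dualityMap x) (hx' : x' ∈ dualityMap q) (h : inSubdiffFitz A x x' (-p) (-q)) :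
    (-q, -p) ∈ A ∧ p ∈ dualityMap (-q) := by
  have key : ∀ z z', (z, z') ∈ A → p q + p x + x' q + x' x ≤ (p + z') (q + z) := by
    intro z z' hz
    have := hA.apply_le_of_inSubdiffFitz h hz
    simp only [neg_apply, sub_apply, add_apply, map_sub, map_neg, map_add] at this ⊢
    linarith
  have hmem : (-q, -p) ∈ A := hA.2 _ fun ⟨z, z'⟩ hz =>
    calc (0 : ℝ) ≤ (‖x‖ - ‖q‖) ^ 2 := sq_nonneg _
      _ ≤ p q + p x + x' q + x' x := sq_norm_sub_norm_le_of_mem_dualityMap hp hx'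
      _ ≤ (p + z') (q + z) := key z z' hz
      _ = (-p - z') (-q - z) := by rw [← neg_add', ← neg_add', map_neg, neg_apply, neg_neg]
  refine ⟨hmem, mem_dualityMap_neg_of_le_zero hp hx' ?_⟩
  simpa using key _ _ hmem

end

/-- `0 ∈ R(J_X + A)` iff `(0, 0) ∈ R(J_X ⊗ J_X⁻¹ + ∂H_A)`. -/
theorem zero_in_range_iff (A : Set (X × (X →L[ℝ] ℝ))) (hA : MaximalMonotoneSet A) :
    (∃ (x : X) (y' x' : X →L[ℝ] ℝ), y' ∈ dualityMap x ∧ (x, x') ∈ A ∧ y' + x' = 0) ↔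
      (∃ (x : X) (x' : X →L[ℝ] ℝ) (p : X →L[ℝ] ℝ) (q : X) (w' : X →L[ℝ] ℝ) (w : X),
        p ∈ dualityMap x ∧ x' ∈ dualityMap q ∧ inSubdiffFitz A x x' w' w ∧
          p + w' = 0 ∧ q + w = 0) := by
  constructor
  · rintro ⟨x, y', x', hy', hxA, hsum⟩
    obtain rfl : x' = -y' := eq_neg_of_add_eq_zero_right hsum
    exact ⟨x, -y', y', -x, -y', x, hy', neg_mem_dualityMap_neg hy',
      inSubdiffFitz_of_mem hA.1 hxA, hsum, neg_add_cancel x⟩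
  · rintro ⟨x, x', p, q, w', w, hp, hx', hsub, hpw, hqw⟩
    obtain rfl : w' = -p := eq_neg_of_add_eq_zero_right hpw
    obtain rfl : w = -q := eq_neg_of_add_eq_zero_right hqw
    obtain ⟨hmem, hpJ⟩ := hA.neg_mem_and_mem_dualityMap_of_inSubdiffFitz hp hx' hsub
    exact ⟨-q, p, -p, hpJ, hmem, add_neg_cancel p⟩
end
end

section
/- Let X be a real Banach space and φ : X → (-∞, +∞] a proper convex l.s.c. function, ψ : X → ℝ a continuous convex function. Then for all x ∈ Dom(∂φ), ∂(φ + ψ)(x) = ∂φ(x) + ∂ψ(x). -/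
/-
If `s ∈ ∂(φ + ψ)(x)`, the continuous concave function `κ y = ⟨y - x, s⟩ + φ x + ψ x - ψ y` lies
below `φ` and touches it at `x`. Hahn–Banach separation of the open strict hypograph of `κ` from
the epigraph of `φ` produces a continuous affine function squeezed between `κ` and `φ`. It touches
both at `x`, so its slope `a` lies in `∂φ(x)` and `s - a` in `∂ψ(x)`.
-/

noncomputable section

variable {X : Type*} [NormedAddCommGroup X] [NormedSpace ℝ X] [CompleteSpace X]

open Set

theorem ERealConvexOn.convex_epigraph_s18 {E : Type*} [AddCommGroup E] [Module ℝ E]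
    {φ : E → EReal} (hφ : ERealConvexOn φ) : Convex ℝ {p : E × ℝ | φ p.1 ≤ p.2} := by
  rintro ⟨y, s⟩ (hy : φ y ≤ s) ⟨z, t⟩ (hz : φ z ≤ t) a b ha hb hab
  calc φ (a • y + b • z) ≤ a * φ y + b * φ z := hφ y z a b ha hb hab
    _ ≤ a * s + b * t := by gcongr
    _ = ((a * s + b * t : ℝ) : EReal) := by norm_cast

theorem ContinuousLinearMap.apply_prod_real_s18 {E : Type*} [TopologicalSpace E] [AddCommGroup E]
    [Module ℝ E] (F : StrongDual ℝ (E × ℝ)) (y : E) (t : ℝ) :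
    F (y, t) = F (y, 0) + t * F (0, 1) := by
  rw [← smul_eq_mul, ← map_smul, ← map_add, Prod.smul_mk, smul_zero, smul_eq_mul, mul_one,
    Prod.mk_add_mk, add_zero, zero_add]

section Sandwich

variable {E : Type*} [TopologicalSpace E] [AddCommGroup E] [IsTopologicalAddGroup E]
  [Module ℝ E] [ContinuousSMul ℝ E]

theorem ERealConvexOn.exists_affine_between {φ : E → EReal} {κ : E → ℝ} (hφ : ERealConvexOn φ)
    (hdom : ∃ y, φ y ≠ ⊤) (hκ : ConcaveOn ℝ univ κ) (hκc : Continuous κ)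
    (hle : ∀ y, (κ y : EReal) ≤ φ y) :
    ∃ (L : StrongDual ℝ E) (e : ℝ), ∀ y, κ y ≤ L y + e ∧ ((L y + e : ℝ) : EReal) ≤ φ y := by
  have hO : Convex ℝ {p : E × ℝ | p.2 < κ p.1} := by
    simpa only [mem_univ, true_and] using hκ.convex_strict_hypograph
  have hdisj : Disjoint {p : E × ℝ | p.2 < κ p.1} {p | φ p.1 ≤ p.2} :=
    disjoint_left.2 fun p (hp : p.2 < κ p.1) (hq : φ p.1 ≤ p.2) =>
      (EReal.coe_lt_coe_iff.2 hp).not_ge ((hle p.1).trans hq)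
  obtain ⟨F, w, hFO, hFB⟩ := geometric_hahn_banach_open hO
    (isOpen_lt continuous_snd (hκc.comp continuous_fst)) hφ.convex_epigraph_s18 hdisj
  set k := F (0, 1)
  have below (y : E) (t : ℝ) (ht : t < κ y) : F (y, 0) + t * k < w :=
    F.apply_prod_real_s18 y t ▸ hFO (y, t) ht
  have above (y : E) (t : ℝ) (ht : φ y ≤ t) : w ≤ F (y, 0) + t * k :=
    F.apply_prod_real_s18 y t ▸ hFB (y, t) ht
  -- a non-positive `k` would put `(y₀, κ y₀ - 1)` on the same side as `(y₀, φ y₀)`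
  have hk : 0 < k := by
    obtain ⟨y₀, hy₀⟩ := hdom
    set t₀ := (φ y₀).toReal
    have ht₀ : φ y₀ = t₀ :=
      (EReal.coe_toReal hy₀ (ne_bot_of_le_ne_bot (EReal.coe_ne_bot _) (hle y₀))).symm
    have hκt₀ : κ y₀ ≤ t₀ := EReal.coe_le_coe_iff.1 (ht₀ ▸ hle y₀)
    have := (below y₀ (κ y₀ - 1) (by linarith)).trans_le (above y₀ t₀ ht₀.le)
    by_contra! hk
    nlinarith
  -- the graph of `L + k⁻¹ * w` is the separating hyperplane `F = w`
  set L : StrongDual ℝ E := -k⁻¹ • F.comp (ContinuousLinearMap.inl ℝ E ℝ)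
  have hL (y : E) : L y + k⁻¹ * w = (w - F (y, 0)) / k := by
    simp only [smul_apply, ContinuousLinearMap.comp_apply, ContinuousLinearMap.inl_apply,
      smul_eq_mul, L]
    ring
  refine ⟨L, k⁻¹ * w, fun y => ⟨?_, ?_⟩⟩
  · refine le_of_forall_lt fun t ht => ?_
    rw [hL, lt_div_iff₀ hk]
    linarith [below y t ht]
  · refine EReal.le_of_forall_lt_iff_le.1 fun t ht => EReal.coe_le_coe_iff.2 ?_
    rw [hL, div_le_iff₀ hk]
    linarith [above y t ht.le]

end Sandwich

section Subdiff

variable {E : Type*} [NormedAddCommGroup E] [NormedSpace ℝ E]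

theorem ProperFn.ne_top_of_mem_subdiff {φ : E → EReal} (hφ : ProperFn φ) {x : E}
    {x' : StrongDual ℝ E} (hx : (x, x') ∈ subdiff φ) : φ x ≠ ⊤ := by
  obtain ⟨-, y₀, hy₀⟩ := hφ
  intro htop
  have := hx y₀
  rw [htop, EReal.add_top_of_ne_bot (EReal.coe_ne_bot _)] at this
  exact hy₀ (top_le_iff.1 this)

theorem add_mem_subdiff_add {φ : E → EReal} {ψ : E → ℝ} {x : E} {a b : StrongDual ℝ E}
    (ha : (x, a) ∈ subdiff φ) (hb : ∀ y, b (y - x) + ψ x ≤ ψ y) :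
    (x, a + b) ∈ subdiff (fun y => φ y + ψ y) := fun y => by
  calc (((a + b) (y - x) : ℝ) : EReal) + (φ x + ψ x)
      = ((a (y - x) : ℝ) + φ x) + ((b (y - x) + ψ x : ℝ) : EReal) := by
        rw [add_apply, EReal.coe_add, EReal.coe_add]; abel
    _ ≤ φ y + ψ y := add_le_add (ha y) (EReal.coe_le_coe_iff.2 (hb y))

theorem exists_add_of_mem_subdiff_add {φ : E → EReal} {ψ : E → ℝ} (hφ : ERealConvexOn φ)
    (hψ : ConvexOn ℝ univ ψ) (hψc : Continuous ψ) {x : E} {c : ℝ} (hc : φ x = c)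
    {s : StrongDual ℝ E} (hs : (x, s) ∈ subdiff (fun y => φ y + ψ y)) :
    ∃ a b : StrongDual ℝ E, (x, a) ∈ subdiff φ ∧ (∀ y, b (y - x) + ψ x ≤ ψ y) ∧ s = a + b := by
  set κ : E → ℝ := fun y => s (y - x) + c + ψ x - ψ y
  have hκ : ConcaveOn ℝ univ κ := by
    have hκ_eq : κ = fun y => s y + (c + ψ x - s x) - ψ y := by
      ext y
      simp only [κ, map_sub]
      ring
    exact hκ_eq ▸ ((s.toLinearMap.concaveOn convex_univ).add_const _).sub hψ
  have hκφ (y : E) : (κ y : EReal) ≤ φ y := by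
    rw [EReal.coe_sub,
      EReal.sub_le_iff_le_add (.inl (EReal.coe_ne_bot _)) (.inl (EReal.coe_ne_top _))]
    calc ((s (y - x) + c + ψ x : ℝ) : EReal) = s (y - x) + (c + ψ x) := by
          push_cast; rw [add_assoc]
      _ ≤ φ y + ψ y := hc ▸ hs y
  obtain ⟨L, e, hLe⟩ :=
    hφ.exists_affine_between ⟨x, hc ▸ EReal.coe_ne_top c⟩ hκ (by fun_prop) hκφ
  have hLx : L x + e = c :=
    le_antisymm (EReal.coe_le_coe_iff.1 (hc ▸ (hLe x).2)) (by simpa [κ] using (hLe x).1)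
  refine ⟨L, s - L, fun y => ?_, fun y => ?_, by abel⟩
  · calc ((L (y - x) : ℝ) : EReal) + φ x = ((L y + e : ℝ) : EReal) := by
          rw [hc, ← EReal.coe_add, map_sub]; congr 1; linarith
      _ ≤ φ y := (hLe y).2
  · have := (hLe y).1
    simp only [κ, sub_apply, map_sub] at this ⊢
    linarith

end Subdiff

theorem subdiff_add_rule_general (φ : X → EReal) (hproper : ProperFn φ)
    (hconv : ERealConvexOn φ)
    (ψ : X → ℝ) (hψc : Continuous ψ) (hψconv : ConvexOn ℝ Set.univ ψ)
    (x : X) (hx : ∃ x', (x, x') ∈ subdiff φ) :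
    {s : X →L[ℝ] ℝ | (x, s) ∈ subdiff (fun y => φ y + ((ψ y : ℝ) : EReal))} =
      {s : X →L[ℝ] ℝ | ∃ a b : X →L[ℝ] ℝ, (x, a) ∈ subdiff φ ∧
        (∀ y : X, b (y - x) + ψ x ≤ ψ y) ∧ s = a + b} := by
  obtain ⟨x', hx'⟩ := hx
  have hc : φ x = (φ x).toReal :=
    (EReal.coe_toReal (hproper.ne_top_of_mem_subdiff hx') (hproper.1 x)).symm
  ext s
  exact ⟨exists_add_of_mem_subdiff_add hconv hψconv hψc hc,
    fun ⟨a, b, ha, hb, hs⟩ => hs ▸ add_mem_subdiff_add ha hb⟩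

/-- subdifferential sum rule `∂(φ + ψ)(x) = ∂φ(x) + ∂ψ(x)` for
`x ∈ Dom(∂φ)`, with `ψ` real-valued continuous convex. -/
theorem subdiff_add_rule (φ : X → EReal) (hproper : ProperFn φ)
    (hconv : ERealConvexOn φ) (hlsc : LowerSemicontinuous φ)
    (ψ : X → ℝ) (hψc : Continuous ψ) (hψconv : ConvexOn ℝ Set.univ ψ)
    (x : X) (hx : ∃ x', (x, x') ∈ subdiff φ) :
    {s : X →L[ℝ] ℝ | (x, s) ∈ subdiff (fun y => φ y + ((ψ y : ℝ) : EReal))} =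
      {s : X →L[ℝ] ℝ | ∃ a b : X →L[ℝ] ℝ, (x, a) ∈ subdiff φ ∧
        (∀ y : X, b (y - x) + ψ x ≤ ψ y) ∧ s = a + b} :=
  subdiff_add_rule_general φ hproper hconv ψ hψc hψconv x hx
end
end
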